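/- Let 0<α<1 and 0<λ≤λ⋆=(1−α)/√((1−α)²+α²). The function f₂(z) = z(1 − (αλ/(2−α))z²)^{−1/α} (principal branch), which corresponds to the Schwarz function ω(z)=z² in the representation (z/f(z))^α = 1 − αλ z^α ∫₀^z ω(t)/t^{α+1} dt, belongs to U(α,λ) and its second logarithmic coefficient equals γ₂ = λ/(2(2−α)). In particular, the bound |γ₂| ≤ λ/(2(2−α)) of the main theorem is attained, hence sharp. -/

import Mathlib

/-!
Write `c = αλ/(2-α)` and `w = 1 - c z²`, so `f₂ z = z w^(-1/α)`. Since `λ ≤ λ⋆` forces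
`c ≤ 1/2`, on the unit disc `w` lies in the half-plane `Re w ≥ 1/2`, hence
`|arg w| ≤ 2c < πα` and the principal powers compose: `(z / f₂ z)^u = w^(u/α)`. With
`f₂' = w^(-1/α-1) (1 + (2/α - 1) c z²)` this gives `(z / f₂ z)^(1+α) f₂' - 1 = λ z²` and
`(z / f₂ z)^α = w = 1 - αλ z^α ∫₀^z t^(1-α) dt`. Finally
`log (f₂ z / z) = -log w / α = ∑ cᵏ z^(2k) / (kα)`, and uniqueness of power-series
coefficients yields `2γ₂ = c/α`.
-/

open Complex Metric Set

/-- The class `U(α,λ)`: analytic functions on the unit disc of the form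
`f(z) = z + a₂z² + ⋯` satisfying `|(z/f(z))^(1+α) f'(z) - 1| < λ` there
(principal branch). -/
noncomputable def UClass (a l : ℝ) : Set (ℂ → ℂ) :=
  {f | AnalyticOnNhd ℂ f (ball 0 1) ∧ f 0 = 0 ∧ deriv f 0 = 1 ∧
    ∀ z ∈ ball (0:ℂ) 1, z ≠ 0 →
      ‖(z / f z) ^ ((1:ℂ) + (a:ℂ)) * deriv f z - 1‖ < l}

/-- `IsLogCoeff f γ` means the `γ n`, `n ≥ 1`, are the logarithmic coefficients
of `f`, i.e. `log (f z / z) = 2 ∑_{n≥1} γ n zⁿ` on the punctured unit disc. -/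
def IsLogCoeff (f : ℂ → ℂ) (γ : ℕ → ℂ) : Prop :=
  ∀ z ∈ ball (0:ℂ) 1, z ≠ 0 →
    HasSum (fun n : ℕ => 2 * γ (n + 1) * z ^ (n + 1)) (Complex.log (f z / z))
/-- `segInt a ω z = ∫₀^z ω(t)/t^(a+1) dt`, the integral taken along the segment
from `0` to `z` (parametrised by `t = s·z`, `s ∈ [0,1]`), with principal powers. -/
noncomputable def segInt (a : ℝ) (ω : ℂ → ℂ) (z : ℂ) : ℂ :=
  z * ∫ s in (0:ℝ)..1, ω ((s:ℂ) * z) / (((s:ℂ) * z) ^ ((a:ℂ) + 1))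

open scoped Real

theorem Real.abs_le_abs_tan {x : ℝ} (hx : |x| < π / 2) : |x| ≤ |Real.tan x| := by
  rcases le_or_gt 0 x with h | h
  · rw [abs_of_nonneg h] at hx ⊢
    exact (Real.le_tan h hx).trans (le_abs_self _)
  · rw [abs_of_neg h] at hx ⊢
    rw [← abs_neg, ← Real.tan_neg]
    exact (Real.le_tan (by linarith) hx).trans (le_abs_self _)

theorem Complex.abs_arg_le_abs_im_div_re {z : ℂ} (hz : 0 < z.re) :
    |arg z| ≤ |z.im| / z.re := by
  have := Real.abs_le_abs_tan (abs_arg_lt_pi_div_two_iff.mpr (Or.inl hz))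
  rwa [tan_arg, abs_div, abs_of_pos hz] at this

theorem Complex.abs_arg_one_sub_le {v : ℂ} (hv : ‖v‖ ≤ 1 / 2) :
    |arg (1 - v)| ≤ 2 * ‖v‖ := by
  have hre : 1 / 2 ≤ (1 - v).re := by
    have := abs_le.mp ((abs_re_le_norm v).trans hv)
    simp only [sub_re, one_re]; linarith
  calc |arg (1 - v)| ≤ |(1 - v).im| / (1 - v).re := abs_arg_le_abs_im_div_re (by linarith)
    _ ≤ ‖v‖ / (1 / 2) := by
        gcongr
        simpa using abs_im_le_norm v
    _ = 2 * ‖v‖ := by ring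

theorem Complex.im_log_mul_ofReal (w : ℂ) (r : ℝ) : (log w * r).im = arg w * r := by
  simp [log_im]

theorem Complex.cpow_ofReal_cpow {w : ℂ} {r : ℝ} (h : |arg w * r| < π) (u : ℂ) :
    (w ^ (r : ℂ)) ^ u = w ^ ((r : ℂ) * u) := by
  rw [← im_log_mul_ofReal] at h
  exact (cpow_mul u (abs_lt.mp h).1 (abs_lt.mp h).2.le).symm

theorem Complex.log_cpow_ofReal {w : ℂ} {r : ℝ} (hw : w ≠ 0) (h : |arg w * r| < π) :
    log (w ^ (r : ℂ)) = log w * r := by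
  rw [← im_log_mul_ofReal] at h
  rw [cpow_def_of_ne_zero hw, log_exp (abs_lt.mp h).1 (abs_lt.mp h).2.le]

theorem Complex.ofReal_mul_cpow_of_pos {s : ℝ} (hs : 0 < s) {z : ℂ} (hz : z ≠ 0) (u : ℂ) :
    ((s : ℂ) * z) ^ u = (s : ℂ) ^ u * z ^ u := by
  have hs' : (s : ℂ) ≠ 0 := by exact_mod_cast hs.ne'
  rw [cpow_def_of_ne_zero (mul_ne_zero hs' hz), cpow_def_of_ne_zero hs', cpow_def_of_ne_zero hz,
    log_ofReal_mul hs hz, add_mul, exp_add, ofReal_log hs.le]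

theorem hasFPowerSeriesOnBall_ofScalars_of_hasSum {c : ℕ → ℂ} {g : ℂ → ℂ} {r : NNReal}
    (hr : 0 < r) (hg : ∀ z : ℂ, ‖z‖ < r → HasSum (fun n => c n * z ^ n) (g z)) :
    HasFPowerSeriesOnBall g (.ofScalars ℂ c) 0 r := by
  refine ⟨?_, by simpa using hr, fun {y} hy => ?_⟩
  · refine le_of_forall_lt_imp_le_of_dense fun r' hr' => ?_
    lift r' to NNReal using (hr'.trans_le le_top).ne
    apply FormalMultilinearSeries.le_radius_of_summable
    simpa [norm_mul, FormalMultilinearSeries.ofScalars_norm] using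
      (hg r' (by simpa using hr')).summable.norm
  · rw [Metric.eball_coe, mem_ball_zero_iff] at hy
    simpa [FormalMultilinearSeries.ofScalars_apply_eq, mul_comm] using hg y hy

theorem eq_of_forall_hasSum_mul_pow {c c' : ℕ → ℂ} {g : ℂ → ℂ} {r : NNReal} (hr : 0 < r)
    (hc : ∀ z : ℂ, ‖z‖ < r → HasSum (fun n => c n * z ^ n) (g z))
    (hc' : ∀ z : ℂ, ‖z‖ < r → HasSum (fun n => c' n * z ^ n) (g z)) : c = c' :=
  FormalMultilinearSeries.ofScalars_series_injective ℂ ℂ <|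
    (hasFPowerSeriesOnBall_ofScalars_of_hasSum hr hc).hasFPowerSeriesAt.eq_formalMultilinearSeries
      (hasFPowerSeriesOnBall_ofScalars_of_hasSum hr hc').hasFPowerSeriesAt

theorem hasSum_neg_log_one_sub_mul_sq {c z : ℂ} (h : ‖c * z ^ 2‖ < 1) :
    HasSum (fun n => (if Even n then c ^ (n / 2) / (n / 2 : ℕ) else 0) * z ^ n)
      (-log (1 - c * z ^ 2)) := by
  rw [← add_zero (-log _)]
  refine HasSum.even_add_odd ?_ ?_
  · convert hasSum_taylorSeries_neg_log h using 2 with k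
    simp [pow_mul, mul_pow, div_mul_eq_mul_div]
  · simp [hasSum_zero]

theorem segInt_sq {a : ℝ} {z : ℂ} (ha : a < 2) (hz : z ≠ 0) :
    segInt a (fun t => t ^ 2) z = z ^ (2 - (a : ℂ)) / (2 - a) := by
  have hint : ∀ s ∈ uIoc (0 : ℝ) 1,
      ((s : ℂ) * z) ^ 2 / ((s : ℂ) * z) ^ ((a : ℂ) + 1)
        = (s : ℂ) ^ (1 - (a : ℂ)) * z ^ (1 - (a : ℂ)) := by
    intro s hs
    rw [uIoc_of_le zero_le_one] at hs
    have hsz : (s : ℂ) * z ≠ 0 := mul_ne_zero (by exact_mod_cast hs.1.ne') hz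
    rw [← cpow_ofNat, ← cpow_sub _ _ hsz, ofReal_mul_cpow_of_pos hs.1 hz]
    ring_nf
  have h2a : (2 : ℂ) - a ≠ 0 := by
    rw [← ofReal_ofNat, ← ofReal_sub]; exact_mod_cast (sub_pos.mpr ha).ne'
  rw [segInt, intervalIntegral.integral_congr_ae (Filter.Eventually.of_forall hint),
    intervalIntegral.integral_mul_const, integral_cpow (Or.inl (by simp; linarith)),
    show 1 - (a : ℂ) + 1 = 2 - a by ring, ofReal_one, one_cpow, ofReal_zero, zero_cpow h2a,
    show (2 : ℂ) - a = 1 + (1 - a) by ring, cpow_add _ _ hz, cpow_one]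
  ring

noncomputable def extremalFun (c a : ℝ) (z : ℂ) : ℂ :=
  z * (1 - (c : ℂ) * z ^ 2) ^ (-(1 : ℂ) / a)

theorem norm_ofReal_mul_sq_le {c : ℝ} {z : ℂ} (hz : ‖z‖ < 1) :
    ‖(c : ℂ) * z ^ 2‖ ≤ |c| := by
  rw [norm_mul, norm_pow, norm_real, Real.norm_eq_abs]
  exact mul_le_of_le_one_right (abs_nonneg c) (pow_le_one₀ (norm_nonneg z) hz.le)

theorem one_sub_ofReal_mul_sq_mem_slitPlane {c : ℝ} {z : ℂ} (hc : |c| < 1) (hz : ‖z‖ < 1) :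
    1 - (c : ℂ) * z ^ 2 ∈ slitPlane := by
  rw [sub_eq_add_neg]
  exact mem_slitPlane_of_norm_lt_one
    ((norm_neg _).trans_le (norm_ofReal_mul_sq_le hz) |>.trans_lt hc)

namespace extremalFun

variable {c a : ℝ} {z : ℂ}

theorem hasDerivAt (ha : a ≠ 0) (hw : 1 - (c : ℂ) * z ^ 2 ∈ slitPlane) :
    HasDerivAt (extremalFun c a)
      ((1 - (c : ℂ) * z ^ 2) ^ (-(1 : ℂ) / a - 1) * (1 + (2 / a - 1) * c * z ^ 2)) z := by
  have hw0 : 1 - (c : ℂ) * z ^ 2 ≠ 0 := slitPlane_ne_zero hw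
  have hinner : HasDerivAt (fun z : ℂ => 1 - (c : ℂ) * z ^ 2) (-(c * (2 * z))) z := by
    simpa using ((hasDerivAt_pow 2 z).const_mul (c : ℂ)).const_sub 1
  refine ((hasDerivAt_id z).mul (hinner.cpow_const (c := -(1 : ℂ) / a) hw)).congr_deriv ?_
  rw [cpow_sub _ _ hw0, cpow_one, id]
  have : (a : ℂ) ≠ 0 := by exact_mod_cast ha
  field_simp
  ring

theorem apply_div_eq (hz : z ≠ 0) :
    extremalFun c a z / z = (1 - (c : ℂ) * z ^ 2) ^ ((-a⁻¹ : ℝ) : ℂ) := by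
  rw [extremalFun, mul_div_cancel_left₀ _ hz]
  push_cast
  ring_nf

theorem div_apply_eq (hz : z ≠ 0) :
    z / extremalFun c a z = (1 - (c : ℂ) * z ^ 2) ^ ((a⁻¹ : ℝ) : ℂ) := by
  rw [extremalFun, div_mul_cancel_left₀ hz, neg_div, cpow_neg, inv_inv]
  push_cast
  ring_nf

theorem div_apply_cpow (hz : z ≠ 0) (harg : |arg (1 - (c : ℂ) * z ^ 2) * a⁻¹| < π)
    (u : ℂ) :
    (z / extremalFun c a z) ^ u = (1 - (c : ℂ) * z ^ 2) ^ ((a⁻¹ : ℝ) * u) := by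
  rw [div_apply_eq hz, cpow_ofReal_cpow harg]

theorem div_apply_cpow_self (ha : a ≠ 0) (hz : z ≠ 0)
    (harg : |arg (1 - (c : ℂ) * z ^ 2) * a⁻¹| < π) :
    (z / extremalFun c a z) ^ (a : ℂ) = 1 - (c : ℂ) * z ^ 2 := by
  have : (a : ℂ) ≠ 0 := by exact_mod_cast ha
  rw [div_apply_cpow hz harg, ofReal_inv, inv_mul_cancel₀ this, cpow_one]

theorem div_apply_cpow_mul_deriv_sub_one (ha : a ≠ 0) (hz : z ≠ 0)
    (hw : 1 - (c : ℂ) * z ^ 2 ∈ slitPlane)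
    (harg : |arg (1 - (c : ℂ) * z ^ 2) * a⁻¹| < π) :
    (z / extremalFun c a z) ^ (1 + (a : ℂ)) * deriv (extremalFun c a) z - 1
      = (c * (2 - a) / a : ℝ) * z ^ 2 := by
  have : (a : ℂ) ≠ 0 := by exact_mod_cast ha
  rw [div_apply_cpow hz harg, (hasDerivAt ha hw).deriv, ← mul_assoc,
    ← cpow_add _ _ (slitPlane_ne_zero hw),
    show ((a⁻¹ : ℝ) : ℂ) * (1 + a) + (-1 / a - 1) = 0 by push_cast; field_simp; ring,
    cpow_zero]
  push_cast
  field_simp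
  ring

theorem log_apply_div (hz : z ≠ 0) (hw : 1 - (c : ℂ) * z ^ 2 ≠ 0)
    (harg : |arg (1 - (c : ℂ) * z ^ 2) * a⁻¹| < π) :
    log (extremalFun c a z / z) = -log (1 - (c : ℂ) * z ^ 2) / a := by
  rw [apply_div_eq hz, log_cpow_ofReal hw (by rwa [mul_neg, abs_neg])]
  push_cast
  ring

end extremalFun

theorem abs_arg_one_sub_ofReal_mul_sq_mul_inv_lt {a c : ℝ} {z : ℂ} (ha : 0 < a)
    (hc : |c| ≤ 1 / 2) (hca : 2 * |c| < π * a) (hz : ‖z‖ < 1) :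
    |arg (1 - (c : ℂ) * z ^ 2) * a⁻¹| < π := by
  have hv := norm_ofReal_mul_sq_le (c := c) hz
  rw [abs_mul, abs_inv, abs_of_pos ha, ← div_eq_mul_inv, div_lt_iff₀ ha]
  linarith [abs_arg_one_sub_le (hv.trans hc)]

theorem extremalFun.mem_UClass {a c : ℝ} (ha : 0 < a) (ha2 : a < 2) (hc0 : 0 < c)
    (hc : c ≤ 1 / 2) (hca : 2 * c < π * a) : extremalFun c a ∈ UClass a (c * (2 - a) / a) := by
  have hc1 : |c| < 1 := by rw [abs_of_pos hc0]; linarith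
  refine ⟨?_, by simp [extremalFun], ?_, fun z hz hz0 => ?_⟩
  · refine DifferentiableOn.analyticOnNhd (fun z hz => ?_) isOpen_ball
    exact (extremalFun.hasDerivAt ha.ne' (one_sub_ofReal_mul_sq_mem_slitPlane hc1
      (mem_ball_zero_iff.mp hz))).differentiableAt.differentiableWithinAt
  · rw [(extremalFun.hasDerivAt ha.ne' (by simp)).deriv]
    simp
  · rw [mem_ball_zero_iff] at hz
    rw [extremalFun.div_apply_cpow_mul_deriv_sub_one ha.ne' hz0
      (one_sub_ofReal_mul_sq_mem_slitPlane hc1 hz)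
      (abs_arg_one_sub_ofReal_mul_sq_mul_inv_lt ha (by rwa [abs_of_pos hc0])
        (by rwa [abs_of_pos hc0]) hz), norm_mul, norm_real, norm_pow, Real.norm_eq_abs,
      abs_of_pos (by positivity : 0 < c * (2 - a) / a)]
    exact mul_lt_of_lt_one_right (by positivity) (pow_lt_one₀ (norm_nonneg z) hz two_ne_zero)

theorem extremalFun.logCoeff_two_eq {a c : ℝ} {γ : ℕ → ℂ} (ha : 0 < a) (hc : |c| ≤ 1 / 2)
    (hca : 2 * |c| < π * a) (hγ : IsLogCoeff (extremalFun c a) γ) : γ 2 = c / (2 * a) := by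
  set g : ℂ → ℂ := fun z => -log (1 - (c : ℂ) * z ^ 2) / a
  have hc1 : |c| < 1 := by linarith
  have hγg : ∀ z : ℂ, ‖z‖ < (1 : NNReal) →
      HasSum (fun n => (if n = 0 then 0 else 2 * γ n) * z ^ n) (g z) := by
    intro z hz
    rw [NNReal.coe_one] at hz
    rcases eq_or_ne z 0 with rfl | hz0
    · convert hasSum_zero using 1
      · ext n; rcases n with _ | n <;> simp
      · simp [g]
    rw [← hasSum_nat_add_iff' 1]
    simpa [g, ← extremalFun.log_apply_div hz0
      (slitPlane_ne_zero (one_sub_ofReal_mul_sq_mem_slitPlane hc1 hz))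
      (abs_arg_one_sub_ofReal_mul_sq_mul_inv_lt ha hc hca hz)]
      using hγ z (mem_ball_zero_iff.mpr hz) hz0
  have hlog : ∀ z : ℂ, ‖z‖ < (1 : NNReal) → HasSum
      (fun n => (if Even n then (c : ℂ) ^ (n / 2) / (n / 2 : ℕ) else 0) / a * z ^ n) (g z) := by
    intro z hz
    rw [NNReal.coe_one] at hz
    simpa only [div_mul_eq_mul_div] using (hasSum_neg_log_one_sub_mul_sq
      ((norm_ofReal_mul_sq_le hz).trans_lt hc1)).div_const (a : ℂ)
  have := congrFun (eq_of_forall_hasSum_mul_pow one_pos hγg hlog) 2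
  norm_num at this
  linear_combination this / 2

noncomputable def lambdaStar (a : ℝ) : ℝ := (1 - a) / √((1 - a) ^ 2 + a ^ 2)

theorem extremal_params_of_le_lambdaStar {a l : ℝ} (ha : a ∈ Ioo (0 : ℝ) 1) (hl : 0 < l)
    (hls : l ≤ lambdaStar a) :
    0 < a * l / (2 - a) ∧ a * l / (2 - a) ≤ 1 / 2 ∧ 2 * (a * l / (2 - a)) < π * a := by
  obtain ⟨ha0, ha1⟩ := ha
  have hs_a : a ≤ √((1 - a) ^ 2 + a ^ 2) := Real.le_sqrt_of_sq_le (by nlinarith)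
  have hs_1a : 1 - a ≤ √((1 - a) ^ 2 + a ^ 2) := Real.le_sqrt_of_sq_le (by nlinarith)
  have hs : 0 < √((1 - a) ^ 2 + a ^ 2) := ha0.trans_le hs_a
  have hls' : l * √((1 - a) ^ 2 + a ^ 2) ≤ 1 - a := (le_div_iff₀ hs).mp hls
  have h2a : 0 < 2 - a := by linarith
  refine ⟨by positivity, ?_, ?_⟩
  · rw [div_le_div_iff₀ h2a two_pos]
    nlinarith
  · have hl1 : l ≤ 1 := le_of_mul_le_mul_right (by linarith) hs
    rw [mul_div_assoc', div_lt_iff₀ h2a]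
    nlinarith [Real.pi_gt_three, mul_pos ha0 (sub_pos.mpr ha1)]

theorem stmt_18 (a l : ℝ) (ha : a ∈ Ioo (0:ℝ) 1) (hl : 0 < l)
    (hls : l ≤ (1 - a) / Real.sqrt ((1 - a) ^ 2 + a ^ 2)) :
    (fun z : ℂ => z * (1 - ((a * l / (2 - a) : ℝ) : ℂ) * z ^ 2) ^ (-(1:ℂ) / (a:ℂ)))
      ∈ UClass a l ∧
    (∀ z ∈ ball (0:ℂ) 1, z ≠ 0 →
      (z / (z * (1 - ((a * l / (2 - a) : ℝ) : ℂ) * z ^ 2) ^ (-(1:ℂ) / (a:ℂ)))) ^ (a:ℂ) =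
        1 - (a:ℂ) * (l:ℂ) * z ^ (a:ℂ) * segInt a (fun t => t ^ 2) z) ∧
    ∀ γ : ℕ → ℂ,
      IsLogCoeff
        (fun z : ℂ => z * (1 - ((a * l / (2 - a) : ℝ) : ℂ) * z ^ 2) ^ (-(1:ℂ) / (a:ℂ))) γ →
      γ 2 = ((l / (2 * (2 - a)) : ℝ) : ℂ) := by
  obtain ⟨hc0, hc, hca⟩ := extremal_params_of_le_lambdaStar ha hl hls
  set c := a * l / (2 - a) with hc_def
  have ha0 : 0 < a := ha.1
  have h2a : 0 < 2 - a := by linarith [ha.2]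
  have hc' : |c| ≤ 1 / 2 := (abs_of_pos hc0).trans_le hc
  have hca' : 2 * |c| < π * a := by rwa [abs_of_pos hc0]
  refine ⟨?_, fun z hz hz0 => ?_, fun γ hγ => ?_⟩
  · have hl_eq : c * (2 - a) / a = l := by rw [hc_def]; field_simp
    exact hl_eq ▸ extremalFun.mem_UClass ha0 (by linarith) hc0 hc hca
  · rw [mem_ball_zero_iff] at hz
    change (z / extremalFun c a z) ^ (a : ℂ) = _
    rw [extremalFun.div_apply_cpow_self ha0.ne' hz0
        (abs_arg_one_sub_ofReal_mul_sq_mul_inv_lt ha0 hc' hca' hz),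
      segInt_sq (by linarith) hz0, mul_div_assoc', mul_assoc (_ * _) (z ^ (a : ℂ)),
      ← cpow_add _ _ hz0, add_sub_cancel, cpow_ofNat, hc_def]
    push_cast
    field_simp
  · rw [extremalFun.logCoeff_two_eq ha0 hc' hca' hγ]
    norm_cast
    rw [hc_def]
    field_simp
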